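/- Suppose A ∈ ℂ^{n×n} has n distinct eigenvalues λ_1,…,λ_n. Then max_j κ(λ_j) ≤ κ_V(A) ≤ √( n·Σ_{j=1}^n κ(λ_j)² ) ≤ n·max_j κ(λ_j). -/

import Mathlib

open MeasureTheory Matrix
open scoped ENNReal

noncomputable section

/-- ℓ²→ℓ² operator norm of a complex square matrix. -/
def opNorm {n : ℕ} (A : Matrix (Fin n) (Fin n) ℂ) : ℝ :=
  ‖(Matrix.toEuclideanCLM (𝕜 := ℂ) A : EuclideanSpace ℂ (Fin n) →L[ℂ] EuclideanSpace ℂ (Fin n))‖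

/-- `svAsc A i` : the `i`-th *smallest* singular value of `A` (0-indexed). -/
def svAsc {n : ℕ} (A : Matrix (Fin n) (Fin n) ℂ) (i : Fin n) : ℝ :=
  Real.sqrt ((Matrix.isHermitian_conjTranspose_mul_self A).eigenvalues
    (Tuple.sort ((Matrix.isHermitian_conjTranspose_mul_self A).eigenvalues) i))

/-- `sLow A m` = σ_{n-m}(A), the (m+1)-th smallest singular value. -/
def sLow {n : ℕ} (A : Matrix (Fin n) (Fin n) ℂ) (m : ℕ) : ℝ :=
  if h : m < n then svAsc A ⟨m, h⟩ else 0

/-- the ε-pseudospectrum of a matrix, as a subset of ℂ. -/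
def pspec {n : ℕ} (ε : ℝ) (A : Matrix (Fin n) (Fin n) ℂ) : Set ℂ :=
  {z | sLow (z • (1 : Matrix (Fin n) (Fin n) ℂ) - A) 0 ≤ ε}

open scoped Classical in
/-- minimum gap between eigenvalues (counted with multiplicity). -/
def minGap {n : ℕ} (A : Matrix (Fin n) (Fin n) ℂ) : ℝ :=
  sInf {d | ∃ a ∈ A.charpoly.roots, ∃ b ∈ A.charpoly.roots.erase a, d = ‖a - b‖}

/-- eigenvector condition number. -/
def kappaV {n : ℕ} (A : Matrix (Fin n) (Fin n) ℂ) : ℝ≥0∞ :=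
  ⨅ (V : Matrix (Fin n) (Fin n) ℂ) (D : Matrix (Fin n) (Fin n) ℂ)
    (_ : IsUnit V) (_ : D.IsDiag) (_ : A = V * D * V⁻¹),
    ENNReal.ofReal (opNorm V * opNorm V⁻¹)

/-- spectral radius of a matrix. -/
def spr {n : ℕ} (A : Matrix (Fin n) (Fin n) ℂ) : ℝ :=
  sSup {x : ℝ | ∃ μ ∈ spectrum ℂ A, x = ‖μ‖}

/-- ℓ∞→ℓ∞ operator norm (max absolute row sum). -/
def infNorm {n : ℕ} (A : Matrix (Fin n) (Fin n) ℂ) : ℝ :=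
  ⨆ i, ∑ j, ‖A i j‖

/-- ℓ² norm of a vector in ℂⁿ. -/
def l2norm {n : ℕ} (v : Fin n → ℂ) : ℝ :=
  Real.sqrt (∑ j, ‖v j‖ ^ 2)

/-- standard complex Gaussian measure on ℂ. -/
def gaussianC : Measure ℂ :=
  MeasureTheory.volume.withDensity fun z => ENNReal.ofReal (Real.pi⁻¹ * Real.exp (-(‖z‖ ^ 2)))

/-- law of δ ⬝ g : δ Bernoulli(ρ), g standard complex Gaussian, independent. -/
def sparseG (ρ : ℝ) : Measure ℂ :=
  ENNReal.ofReal ρ • gaussianC + ENNReal.ofReal (1 - ρ) • Measure.dirac 0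

/-- law of a vector with i.i.d. sparse-Gaussian entries. -/
def vecLaw (n : ℕ) (ρ : ℝ) : Measure (Fin n → ℂ) :=
  Measure.pi fun _ => sparseG ρ

instance matrixMeasurableSpace {n : ℕ} : MeasurableSpace (Matrix (Fin n) (Fin n) ℂ) :=
  inferInstanceAs (MeasurableSpace (Fin n → Fin n → ℂ))

/-- law of the random matrix N_g with i.i.d. sparse-Gaussian entries. -/
def matLaw (n : ℕ) (ρ : ℝ) : Measure (Matrix (Fin n) (Fin n) ℂ) :=
  Measure.pi fun _ : Fin n => vecLaw n ρ

/-- Lévy concentration p(v,r) of ⟨ĝ ⊙ δ̂, v⟩. -/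
def pconc (n : ℕ) (ρ : ℝ) (v : Fin n → ℂ) (r : ℝ) : ℝ≥0∞ :=
  ⨆ z : ℂ, vecLaw n ρ {x | ‖(∑ j, x j * (starRingEnd ℂ) (v j)) - z‖ ≤ r}

/-- incompressible unit vectors. -/
def Incomp (n : ℕ) (ρ : ℝ) (r s : ℝ) : Set (Fin n → ℂ) :=
  {v | l2norm v = 1 ∧ pconc n ρ v r ≤ ENNReal.ofReal s}

/-- compressible unit vectors. -/
def Comp (n : ℕ) (ρ : ℝ) (r s : ℝ) : Set (Fin n → ℂ) :=
  {v | l2norm v = 1 ∧ ENNReal.ofReal s ≤ pconc n ρ v r}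

/-- eigenvalue condition number κ(λ_j) read off from a diagonalizing matrix V:
    (norm of j-th column of V) times (norm of j-th row of V⁻¹). -/
def evCond {n : ℕ} (V : Matrix (Fin n) (Fin n) ℂ) (j : Fin n) : ℝ :=
  l2norm (fun i => V i j) * l2norm (fun i => V⁻¹ j i)

/-- the event that `B` has `n` distinct eigenvalues with all squared
    eigenvalue condition numbers at most τ. -/
def distinctCondEvent {n : ℕ} (τ : ℝ) (B : Matrix (Fin n) (Fin n) ℂ) : Prop :=
  ∃ (V : Matrix (Fin n) (Fin n) ℂ) (lam : Fin n → ℂ), Function.Injective lam ∧ IsUnit V ∧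
    B = V * Matrix.diagonal lam * V⁻¹ ∧ ∀ j, (evCond V j) ^ 2 ≤ τ

/-! Write `A = V diag(λ) V⁻¹`. The `j`-th column `vⱼ` of `V` and the `j`-th row `wⱼ` of `V⁻¹` are
right and left eigenvectors for `λⱼ`, so `κ(λⱼ) = ‖vⱼ‖‖wⱼ‖`.

Lower bound: since the eigenvalues are distinct, any other diagonalization `A = V' D V'⁻¹` differs
from this one by a monomial matrix, so `vⱼ` and `wⱼ` are, up to reciprocal scalars, a column of `V'`
and the matching row of `V'⁻¹`. Their norms are bounded by `‖V'‖` and `‖V'⁻¹‖`.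

Upper bound: rescale the columns of `V` so that `‖vⱼ‖ = ‖wⱼ‖ = √κ(λⱼ)`. The Frobenius norms of the
rescaled matrix and of its inverse are then both `√(∑ⱼ κ(λⱼ))`, which bounds the operator norms,
and `∑ⱼ κ(λⱼ) ≤ √(n ∑ⱼ κ(λⱼ)²)` by Cauchy–Schwarz. -/

lemma sum_le_sqrt_card_mul_sum_sq {ι : Type*} [Fintype ι] (f : ι → ℝ) :
    ∑ i, f i ≤ √(Fintype.card ι * ∑ i, f i ^ 2) :=
  (le_abs_self _).trans (Real.abs_le_sqrt (sq_sum_le_card_mul_sum_sq (s := Finset.univ)))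

lemma sqrt_card_mul_sum_sq_le_card_mul_iSup {ι : Type*} [Fintype ι] {f : ι → ℝ}
    (hf : ∀ i, 0 ≤ f i) :
    √(Fintype.card ι * ∑ i, f i ^ 2) ≤ Fintype.card ι * ⨆ i, f i := by
  have hsup : 0 ≤ ⨆ i, f i := Real.iSup_nonneg hf
  have hsum : ∑ i, f i ^ 2 ≤ Fintype.card ι * (⨆ i, f i) ^ 2 := by
    simpa using Finset.sum_le_card_nsmul Finset.univ (f · ^ 2) _ fun i _ =>
      pow_le_pow_left₀ (hf i) (le_ciSup (Set.finite_range f).bddAbove i) 2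
  calc √(Fintype.card ι * ∑ i, f i ^ 2) ≤ √((Fintype.card ι * ⨆ i, f i) ^ 2) := by
        gcongr
        nlinarith [Nat.cast_nonneg (α := ℝ) (Fintype.card ι)]
    _ = Fintype.card ι * ⨆ i, f i := Real.sqrt_sq (by positivity)

open Function

namespace Matrix

variable {ι K : Type*} [Fintype ι] [DecidableEq ι] [Field K]

lemma apply_eq_zero_of_mul_diagonal_eq_diagonal_mul {M : Matrix ι ι K} {a b : ι → K}
    (h : M * diagonal a = diagonal b * M) {i k : ι} (hik : a k ≠ b i) : M i k = 0 := by
  have hik' : (a k - b i) * M i k = 0 := by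
    linear_combination (by simpa using congrFun₂ h i k : M i k * a k = b i * M i k)
  exact (mul_eq_zero.mp hik').resolve_left (sub_ne_zero.mpr hik)

lemma injective_of_mul_diagonal_eq_diagonal_mul {M N : Matrix ι ι K} {a b : ι → K}
    (h : M * diagonal a = diagonal b * M) (hNM : N * M = 1) (ha : Injective a) :
    Injective b := by
  -- Each column `k` of the invertible `M` has a nonzero entry `M (σ k) k`, forcing `a = b ∘ σ`;
  -- then `σ` is injective, hence surjective.
  have hab : ∀ k, ∃ i, a k = b i := fun k => by
    by_contra! hk
    simpa [mul_apply, apply_eq_zero_of_mul_diagonal_eq_diagonal_mul h (hk _)] using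
      congrFun₂ hNM k k
  choose σ hσ using hab
  have hbσ : Injective (b ∘ σ) := by simpa only [comp_def, ← hσ] using ha
  exact hbσ.of_comp_right (Finite.injective_iff_surjective.mp hbσ.of_comp)

lemma inv_mul_mul_diagonal_eq_diagonal_mul_inv_mul {V V' : Matrix ι ι K} {a b : ι → K}
    (hV : IsUnit V) (hV' : IsUnit V') (h : V * diagonal a * V⁻¹ = V' * diagonal b * V'⁻¹) :
    V'⁻¹ * V * diagonal a = diagonal b * (V'⁻¹ * V) := by
  rw [isUnit_iff_isUnit_det] at hV hV'
  calc V'⁻¹ * V * diagonal a = V'⁻¹ * (V * diagonal a * V⁻¹) * V := by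
        simp only [Matrix.mul_assoc, nonsing_inv_mul _ hV, Matrix.mul_one]
    _ = diagonal b * (V'⁻¹ * V) := by
        simp only [h, Matrix.mul_assoc, nonsing_inv_mul_cancel_left _ _ hV']

lemma exists_col_row_eq_smul_of_diagonal_conj_eq {V V' : Matrix ι ι K} {a b : ι → K}
    (hV : IsUnit V) (hV' : IsUnit V') (ha : Injective a)
    (h : V * diagonal a * V⁻¹ = V' * diagonal b * V'⁻¹) (j : ι) :
    ∃ i, ∃ c : K, c ≠ 0 ∧ V.col j = c • V'.col i ∧ V⁻¹.row j = c⁻¹ • V'⁻¹.row i := by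
  set M := V'⁻¹ * V
  set N := V⁻¹ * V'
  have hM : M * diagonal a = diagonal b * M :=
    inv_mul_mul_diagonal_eq_diagonal_mul_inv_mul hV hV' h
  have hN : N * diagonal b = diagonal a * N :=
    inv_mul_mul_diagonal_eq_diagonal_mul_inv_mul hV' hV h.symm
  rw [isUnit_iff_isUnit_det] at hV hV'
  have hVM : V' * M = V := mul_nonsing_inv_cancel_left V' V hV'
  have hNV : N * V'⁻¹ = V⁻¹ := by
    simp only [N, Matrix.mul_assoc, mul_nonsing_inv _ hV', Matrix.mul_one]
  have hNM : N * M = 1 := by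
    simp only [N, M, Matrix.mul_assoc, mul_nonsing_inv_cancel_left V' V hV', nonsing_inv_mul _ hV]
  have hb := injective_of_mul_diagonal_eq_diagonal_mul hM hNM ha
  obtain ⟨i, -, hi⟩ : ∃ i ∈ Finset.univ, N j i * M i j ≠ 0 := by
    refine Finset.exists_ne_zero_of_sum_ne_zero ?_
    rw [← mul_apply, hNM, one_apply_eq]
    exact one_ne_zero
  have hai : a j = b i := by
    by_contra hne
    exact hi (by rw [apply_eq_zero_of_mul_diagonal_eq_diagonal_mul hM hne, mul_zero])
  -- With `a` and `b` injective, column `j` of `M` and row `j` of `N` are supported at `i` alone.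
  have hMcol : ∀ r ≠ i, M r j = 0 := fun r hr =>
    apply_eq_zero_of_mul_diagonal_eq_diagonal_mul hM (hai ▸ hb.ne hr.symm)
  have hNrow : ∀ r ≠ i, N j r = 0 := fun r hr =>
    apply_eq_zero_of_mul_diagonal_eq_diagonal_mul hN (hai ▸ hb.ne hr)
  have hc : N j i = (M i j)⁻¹ := by
    refine eq_inv_of_mul_eq_one_left ?_
    have hjj := congrFun₂ hNM j j
    rwa [mul_apply, Fintype.sum_eq_single i fun r hr => by rw [hNrow r hr, zero_mul],
      one_apply_eq] at hjj
  refine ⟨i, M i j, right_ne_zero_of_mul hi, funext fun r => ?_, funext fun r => ?_⟩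
  · simp only [col_apply, Pi.smul_apply, smul_eq_mul]
    rw [← hVM, mul_apply, Fintype.sum_eq_single i fun t ht => by rw [hMcol t ht, mul_zero],
      mul_comm]
  · simp only [row_apply, Pi.smul_apply, smul_eq_mul]
    rw [← hNV, mul_apply, Fintype.sum_eq_single i fun t ht => by rw [hNrow t ht, zero_mul], hc]

lemma inv_mul_diagonal (V : Matrix ι ι K) {c : ι → K} (hc : ∀ j, c j ≠ 0) :
    (V * diagonal c)⁻¹ = diagonal c⁻¹ * V⁻¹ := by
  rw [mul_inv_rev, inv_eq_left_inv]
  rw [diagonal_mul_diagonal, ← diagonal_one]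
  exact congrArg diagonal (funext fun j => inv_mul_cancel₀ (hc j))

lemma mul_diagonal_conj_diagonal (V : Matrix ι ι K) {c : ι → K} (hc : ∀ j, c j ≠ 0)
    (lam : ι → K) :
    V * diagonal c * diagonal lam * (V * diagonal c)⁻¹ = V * diagonal lam * V⁻¹ := by
  have hcc : diagonal c * diagonal lam * diagonal c⁻¹ = diagonal lam := by
    simp only [diagonal_mul_diagonal]
    exact congrArg diagonal (funext fun j => by
      rw [Pi.inv_apply, mul_comm (c j), mul_assoc, mul_inv_cancel₀ (hc j), mul_one])
  calc V * diagonal c * diagonal lam * (V * diagonal c)⁻¹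
      = V * (diagonal c * diagonal lam * diagonal c⁻¹) * V⁻¹ := by
        simp only [inv_mul_diagonal V hc, Matrix.mul_assoc]
    _ = V * diagonal lam * V⁻¹ := by rw [hcc]

end Matrix

section

variable {n : ℕ}

lemma l2norm_eq_norm (v : Fin n → ℂ) : l2norm v = ‖WithLp.toLp 2 v‖ := by
  rw [l2norm, EuclideanSpace.norm_eq]

lemma l2norm_nonneg (v : Fin n → ℂ) : 0 ≤ l2norm v := Real.sqrt_nonneg _

lemma sq_l2norm (v : Fin n → ℂ) : l2norm v ^ 2 = ∑ j, ‖v j‖ ^ 2 :=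
  Real.sq_sqrt (Finset.sum_nonneg fun _ _ => sq_nonneg _)

lemma l2norm_pos {v : Fin n → ℂ} (hv : v ≠ 0) : 0 < l2norm v := by
  rw [l2norm_eq_norm, norm_pos_iff]
  exact fun h => hv (congrArg WithLp.ofLp h)

lemma l2norm_smul (c : ℂ) (v : Fin n → ℂ) : l2norm (c • v) = ‖c‖ * l2norm v := by
  rw [l2norm_eq_norm, l2norm_eq_norm, WithLp.toLp_smul, norm_smul]

lemma opNorm_nonneg (A : Matrix (Fin n) (Fin n) ℂ) : 0 ≤ opNorm A := norm_nonneg _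

lemma l2norm_col_le_opNorm (A : Matrix (Fin n) (Fin n) ℂ) (j : Fin n) :
    l2norm (A.col j) ≤ opNorm A := by
  have h := (toEuclideanCLM (𝕜 := ℂ) A).le_opNorm (PiLp.single 2 j 1)
  rwa [PiLp.norm_single, norm_one, mul_one, ← PiLp.toLp_single, toEuclideanCLM_toLp,
    mulVec_single_one, ← l2norm_eq_norm] at h

lemma l2norm_row_le_opNorm (A : Matrix (Fin n) (Fin n) ℂ) (i : Fin n) :
    l2norm (A.row i) ≤ opNorm A := by
  have h := l2norm_col_le_opNorm Aᴴ i
  rw [show opNorm Aᴴ = opNorm A from l2_opNorm_conjTranspose A] at h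
  simpa [l2norm] using h

lemma opNorm_le_sqrt_sum_sq (A : Matrix (Fin n) (Fin n) ℂ) :
    opNorm A ≤ √(∑ i, ∑ j, ‖A i j‖ ^ 2) := by
  let _ := frobeniusNormedAddCommGroup (m := Fin n) (n := Fin n) (α := ℂ)
  have hA : ‖A‖ = √(∑ i, ∑ j, ‖A i j‖ ^ 2) := by
    rw [frobenius_norm_def, Real.sqrt_eq_rpow]
    simp only [Real.rpow_two]
  rw [← hA]
  refine ContinuousLinearMap.opNorm_le_bound _ (norm_nonneg _) fun x => ?_
  have h := frobenius_norm_mul A (replicateCol Unit (WithLp.ofLp x))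
  rwa [← replicateCol_mulVec, frobenius_norm_replicateCol, frobenius_norm_replicateCol] at h

lemma opNorm_mul_diagonal_le (V : Matrix (Fin n) (Fin n) ℂ) (c : Fin n → ℂ) :
    opNorm (V * diagonal c) ≤ √(∑ j, ‖c j‖ ^ 2 * l2norm (V.col j) ^ 2) := by
  refine (opNorm_le_sqrt_sum_sq _).trans_eq ?_
  rw [Finset.sum_comm]
  simp only [sq_l2norm, Finset.mul_sum, mul_diagonal, norm_mul, mul_pow, col_apply, mul_comm]

lemma opNorm_diagonal_mul_le (c : Fin n → ℂ) (V : Matrix (Fin n) (Fin n) ℂ) :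
    opNorm (diagonal c * V) ≤ √(∑ i, ‖c i‖ ^ 2 * l2norm (V.row i) ^ 2) := by
  refine (opNorm_le_sqrt_sum_sq _).trans_eq ?_
  simp only [sq_l2norm, Finset.mul_sum, diagonal_mul, norm_mul, mul_pow, row_apply]

lemma evCond_nonneg (V : Matrix (Fin n) (Fin n) ℂ) (j : Fin n) : 0 ≤ evCond V j :=
  mul_nonneg (l2norm_nonneg _) (l2norm_nonneg _)

lemma evCond_le_opNorm_mul_opNorm_inv (V : Matrix (Fin n) (Fin n) ℂ) (j : Fin n) :
    evCond V j ≤ opNorm V * opNorm V⁻¹ :=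
  mul_le_mul (l2norm_col_le_opNorm V j) (l2norm_row_le_opNorm V⁻¹ j) (l2norm_nonneg _)
    (opNorm_nonneg _)

lemma exists_evCond_eq_of_diagonal_conj_eq {V V' : Matrix (Fin n) (Fin n) ℂ} {a b : Fin n → ℂ}
    (hV : IsUnit V) (hV' : IsUnit V') (ha : Injective a)
    (h : V * diagonal a * V⁻¹ = V' * diagonal b * V'⁻¹) (j : Fin n) :
    ∃ i, evCond V j = evCond V' i := by
  obtain ⟨i, c, hc, hcol, hrow⟩ := exists_col_row_eq_smul_of_diagonal_conj_eq hV hV' ha h j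
  refine ⟨i, ?_⟩
  change l2norm (V.col j) * l2norm (V⁻¹.row j) = l2norm (V'.col i) * l2norm (V'⁻¹.row i)
  rw [hcol, hrow, l2norm_smul, l2norm_smul, norm_inv]
  field_simp [norm_ne_zero_iff.mpr hc]

lemma exists_diagonal_conj_eq_opNorm_mul_opNorm_inv_le {V : Matrix (Fin n) (Fin n) ℂ}
    (hV : IsUnit V) (lam : Fin n → ℂ) :
    ∃ W : Matrix (Fin n) (Fin n) ℂ, IsUnit W ∧ W * diagonal lam * W⁻¹ = V * diagonal lam * V⁻¹ ∧
      opNorm W * opNorm W⁻¹ ≤ ∑ j, evCond V j := by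
  set s := fun j => l2norm (V.col j)
  set r := fun j => l2norm (V⁻¹.row j)
  have hs : ∀ j, 0 < s j := fun j =>
    l2norm_pos ((linearIndependent_cols_iff_isUnit.mpr hV).ne_zero j)
  have hr : ∀ j, 0 < r j := fun j =>
    l2norm_pos ((linearIndependent_rows_iff_isUnit.mpr (isUnit_nonsing_inv_iff.mpr hV)).ne_zero j)
  set c : Fin n → ℂ := fun j => (√(r j / s j) : ℝ)
  have hc2 : ∀ j, ‖c j‖ ^ 2 = r j / s j := fun j => by
    rw [Complex.norm_real, Real.norm_eq_abs, sq_abs, Real.sq_sqrt (div_pos (hr j) (hs j)).le]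
  have hc : ∀ j, c j ≠ 0 := fun j =>
    Complex.ofReal_ne_zero.mpr (Real.sqrt_pos.mpr (div_pos (hr j) (hs j))).ne'
  have hW : IsUnit (V * diagonal c) :=
    hV.mul (isUnit_diagonal.mpr (Pi.isUnit_iff.mpr fun j => (hc j).isUnit))
  have hWcol : opNorm (V * diagonal c) ≤ √(∑ j, evCond V j) := by
    refine (opNorm_mul_diagonal_le V c).trans_eq (congrArg _ (Finset.sum_congr rfl fun j _ => ?_))
    rw [hc2]
    change r j / s j * s j ^ 2 = s j * r j
    field_simp [(hs j).ne']
  have hWrow : opNorm (V * diagonal c)⁻¹ ≤ √(∑ j, evCond V j) := by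
    rw [inv_mul_diagonal V hc]
    refine (opNorm_diagonal_mul_le _ _).trans_eq (congrArg _ (Finset.sum_congr rfl fun j _ => ?_))
    rw [Pi.inv_apply, norm_inv, inv_pow, hc2]
    change (r j / s j)⁻¹ * r j ^ 2 = s j * r j
    field_simp [(hr j).ne']
  refine ⟨V * diagonal c, hW, mul_diagonal_conj_diagonal V hc lam, ?_⟩
  calc opNorm (V * diagonal c) * opNorm (V * diagonal c)⁻¹
      ≤ √(∑ j, evCond V j) * √(∑ j, evCond V j) :=
        mul_le_mul hWcol hWrow (opNorm_nonneg _) (Real.sqrt_nonneg _)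
    _ = ∑ j, evCond V j := Real.mul_self_sqrt (Finset.sum_nonneg fun j _ => evCond_nonneg V j)

lemma ofReal_le_kappaV {A : Matrix (Fin n) (Fin n) ℂ} {x : ℝ}
    (h : ∀ V D : Matrix (Fin n) (Fin n) ℂ, IsUnit V → D.IsDiag → A = V * D * V⁻¹ →
      x ≤ opNorm V * opNorm V⁻¹) :
    ENNReal.ofReal x ≤ kappaV A :=
  le_iInf₂ fun V D => le_iInf₂ fun hV hD => le_iInf fun hA =>
    ENNReal.ofReal_le_ofReal (h V D hV hD hA)

lemma kappaV_le {A V D : Matrix (Fin n) (Fin n) ℂ} (hV : IsUnit V) (hD : D.IsDiag)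
    (hA : A = V * D * V⁻¹) :
    kappaV A ≤ ENNReal.ofReal (opNorm V * opNorm V⁻¹) :=
  iInf₂_le_of_le V D <| iInf₂_le_of_le hV hD <| iInf_le _ hA

end

theorem evCond_le_kappaV_general {n : ℕ} (A V : Matrix (Fin n) (Fin n) ℂ)
    (lam : Fin n → ℂ) (hinj : Function.Injective lam) (hV : IsUnit V)
    (hdiag : A = V * Matrix.diagonal lam * V⁻¹) :
    ENNReal.ofReal (⨆ j, evCond V j) ≤ kappaV A ∧
    kappaV A ≤ ENNReal.ofReal (Real.sqrt (n * ∑ j, evCond V j ^ 2)) ∧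
    Real.sqrt (n * ∑ j, evCond V j ^ 2) ≤ n * ⨆ j, evCond V j := by
  refine ⟨ofReal_le_kappaV fun V' D hV' hD hA => ?_, ?_, ?_⟩
  · refine Real.iSup_le (fun j => ?_) (mul_nonneg (opNorm_nonneg _) (opNorm_nonneg _))
    rw [hdiag, ← hD.diagonal_diag] at hA
    obtain ⟨i, hi⟩ := exists_evCond_eq_of_diagonal_conj_eq hV hV' hinj hA j
    exact hi ▸ evCond_le_opNorm_mul_opNorm_inv V' i
  · obtain ⟨W, hW, hWV, hWκ⟩ := exists_diagonal_conj_eq_opNorm_mul_opNorm_inv_le hV lam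
    calc kappaV A ≤ ENNReal.ofReal (opNorm W * opNorm W⁻¹) :=
          kappaV_le hW (isDiag_diagonal lam) (hdiag.trans hWV.symm)
      _ ≤ _ := ENNReal.ofReal_le_ofReal <| hWκ.trans <| by
          simpa using sum_le_sqrt_card_mul_sum_sq (evCond V)
  · simpa using sqrt_card_mul_sum_sq_le_card_mul_iSup (evCond_nonneg V)

/-- eigenvalue condition numbers versus eigenvector condition number. -/
theorem evCond_le_kappaV {n : ℕ} (hn : 0 < n) (A V : Matrix (Fin n) (Fin n) ℂ)
    (lam : Fin n → ℂ) (hinj : Function.Injective lam) (hV : IsUnit V)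
    (hdiag : A = V * Matrix.diagonal lam * V⁻¹) :
    ENNReal.ofReal (⨆ j, evCond V j) ≤ kappaV A ∧
    kappaV A ≤ ENNReal.ofReal (Real.sqrt (n * ∑ j, evCond V j ^ 2)) ∧
    Real.sqrt (n * ∑ j, evCond V j ^ 2) ≤ n * ⨆ j, evCond V j :=
  evCond_le_kappaV_general A V lam hinj hV hdiag

end
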